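/- Let n ∈ (0, 3/2), θ = 0, and for κ > 0 let H_κ be a solution of H^{n−1}H''' = −1 + x with H_κ(0) = H_κ'(0) = 0 that is positive as long as it exists in (0,1] and satisfies the asymptotics H_κ = κx²(1 + O(κ^{−n}x^{3−2n} + κ^{−n}x^{4−2n})), H_κ' = 2κx(1 + O(κ^{−n}x^{3−2n} + κ^{−n}x^{4−2n})), H_κ'' = 2κ(1 + O(κ^{−n}x^{3−2n} + κ^{−n}x^{4−2n})) as x ↘ 0 (constants depending only on n). Then: (undershoot) there is κ₀ > 0 such that for all 0 < κ ≤ κ₀ there exists x* ∈ (0,1] with H_κ'(x*) ≤ 0; and (overshoot) there is κ₁ > 0 such that for all κ ≥ κ₁, H_κ stays positive on (0,1] with H_κ' > 0 on (0,1] and in particular H_κ'(1) > 0. -/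

import Mathlib

open Set Filter

/-- A local solution of the thin-film similarity ODE with zero contact angle and
limiting half-curvature `κ` at the contact line: `H ∈ C¹([0,1]) ∩ C³((0,1))`,
`H(0) = 0`, `H'(0) = 0`, `H^{n-1}H''' = -1 + x` holds at each `x ∈ (0,1)` as long as `H`
is positive on `(0,x]`, and the asymptotics
`H = κx²(1 + O(κ^{-n}x^{3-2n} + κ^{-n}x^{4-2n}))` (and likewise for `H'`, `H''`) hold
with `O`-constant `C` wherever `κ^{-n}(x^{3-2n}+x^{4-2n}) ≤ 1/C`. -/
def ShootSolZero (n C κ : ℝ) (H : ℝ → ℝ) : Prop :=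
  ContDiffOn ℝ 1 H (Set.Icc 0 1) ∧
  ContDiffOn ℝ 3 H (Set.Ioo 0 1) ∧
  H 0 = 0 ∧
  derivWithin H (Set.Icc 0 1) 0 = 0 ∧
  (∀ x ∈ Set.Ioo (0:ℝ) 1, (∀ y ∈ Set.Ioc (0:ℝ) x, 0 < H y) →
    H x ^ (n - 1) * deriv^[3] H x = -1 + x) ∧
  (∀ x ∈ Set.Ioo (0:ℝ) 1,
    κ ^ (-n) * (x ^ (3 - 2*n) + x ^ (4 - 2*n)) ≤ 1 / C →
      0 < H x ∧
      |H x - κ * x ^ 2| ≤ C * κ * x ^ 2 * (κ ^ (-n) * (x ^ (3 - 2*n) + x ^ (4 - 2*n))) ∧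
      |deriv H x - 2 * κ * x| ≤ C * κ * x * (κ ^ (-n) * (x ^ (3 - 2*n) + x ^ (4 - 2*n))) ∧
      |deriv (deriv H) x - 2 * κ| ≤ C * κ * (κ ^ (-n) * (x ^ (3 - 2*n) + x ^ (4 - 2*n))))

/-!
Overshoot: for large `κ` the error term `κ^{-n}(x^{3-2n} + x^{4-2n})` is small on all of `(0,1)`,
so the asymptotics alone give `H ≥ κx²/2` and `H' ≥ 3κx/2` up to `x = 1`.

Undershoot: if `H' > 0` on `(0,1)`, then `H > 0` and `H''' = (x-1)H^{1-n} < 0`, so `H''` decreases.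
At the scale `δ ≍ κ^{n/(3-2n)}` the asymptotics still hold, so `H, H', H'' = O(κ)` at `δ` and hence
on `[δ,1)`, while `H ≥ H(δ) ≳ κδ²`. For small `κ` this makes `H^{1-n} ≥ 100κ` on `[δ,1)`; then
`H''' ≤ -50κ` on `[δ,1/2]` pushes `H''` below `-9κ`, and `H'` becomes negative before `x = 1`.
-/

open Topology

theorem image_sub_le_mul_sub_of_deriv_le_on {f : ℝ → ℝ} {s : Set ℝ} {x y c : ℝ}
    (hf : DifferentiableOn ℝ f s) (hs : Icc x y ⊆ s) (hxy : x ≤ y)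
    (hc : ∀ z ∈ Ioo x y, deriv f z ≤ c) : f y - f x ≤ c * (y - x) :=
  (convex_Icc x y).image_sub_le_mul_sub_of_deriv_le (hf.mono hs).continuousOn
    (by rw [interior_Icc]; exact hf.mono (Ioo_subset_Icc_self.trans hs))
    (by rwa [interior_Icc]) x (left_mem_Icc.2 hxy) y (right_mem_Icc.2 hxy) hxy

theorem le_rpow_of_mem_Icc {a b y p A : ℝ} (ha : 0 < a) (hy : y ∈ Icc a b) (hAa : A ≤ a ^ p)
    (hAb : A ≤ b ^ p) : A ≤ y ^ p := by
  rcases le_total 0 p with hp | hp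
  · exact hAa.trans (Real.rpow_le_rpow ha.le hy.1 hp)
  · exact hAb.trans (Real.rpow_le_rpow_of_nonpos (ha.trans_le hy.1) hy.2 hp)

theorem eventually_mul_le_mul_rpow (A : ℝ) {B e : ℝ} (hB : 0 < B) (he : e < 1) :
    ∀ᶠ κ in 𝓝[>] 0, A * κ ≤ B * κ ^ e := by
  filter_upwards [(tendsto_rpow_neg_nhdsGT_zero (sub_neg.2 he)).eventually_ge_atTop (A / B),
    self_mem_nhdsWithin] with κ hlarge (hκ : 0 < κ)
  calc A * κ = A / B * B * κ := by field_simp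
    _ ≤ κ ^ (e - 1) * B * κ := by gcongr
    _ = B * κ ^ e := by rw [Real.rpow_sub_one hκ.ne']; field_simp

theorem mul_sq_rpow_div_two {κ s p : ℝ} (hκ : 0 < κ) (hs : 0 < s) (n : ℝ) :
    κ * ((κ ^ n * s) ^ p) ^ 2 / 2 = s ^ (p * 2) / 2 * κ ^ (1 + n * (p * 2)) := by
  rw [← Real.rpow_mul_natCast (by positivity), Real.mul_rpow (by positivity) hs.le,
    ← Real.rpow_mul hκ.le, Real.rpow_add hκ, Real.rpow_one]
  push_cast
  ring

theorem deriv_neg_of_third_deriv_eq {n κ δ : ℝ} {H : ℝ → ℝ}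
    (hH : DifferentiableOn ℝ H (Ioo 0 1)) (hH' : DifferentiableOn ℝ (deriv H) (Ioo 0 1))
    (hH'' : DifferentiableOn ℝ (deriv (deriv H)) (Ioo 0 1))
    (hODE : ∀ x ∈ Ico δ 1, deriv (deriv (deriv H)) x = (x - 1) * H x ^ (1 - n))
    (hκ : 0 < κ) (hδ₀ : 0 < δ) (hδ : δ ≤ 1 / 4) (hmono : ∀ x ∈ Ico δ 1, H δ ≤ H x)
    (hHδ : κ * δ ^ 2 / 2 ≤ H δ) (hHδ' : H δ ≤ κ) (hH'δ : deriv H δ ≤ κ)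
    (hH''δ : deriv (deriv H) δ ≤ 3 * κ)
    (hpow : ∀ y ∈ Icc (κ * δ ^ 2 / 2) (5 * κ), 100 * κ ≤ y ^ (1 - n)) :
    deriv H (15 / 16) < 0 := by
  have hsub : ∀ {a b}, δ ≤ a → b < 1 → Icc a b ⊆ Ioo 0 1 := fun ha hb _ hx =>
    ⟨hδ₀.trans_le (ha.trans hx.1), hx.2.trans_lt hb⟩
  have hH3 : ∀ x ∈ Ico δ 1, deriv (deriv (deriv H)) x ≤ 0 := fun x hx => by
    rw [hODE x hx]
    exact mul_nonpos_of_nonpos_of_nonneg (by linarith [hx.2]) (Real.rpow_nonneg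
      ((by positivity : 0 ≤ κ * δ ^ 2 / 2).trans (hHδ.trans (hmono x hx))) _)
  have hanti : AntitoneOn (deriv (deriv H)) (Ico δ 1) := by
    have hsub' : Ico δ 1 ⊆ Ioo 0 1 := fun x hx => ⟨hδ₀.trans_le hx.1, hx.2⟩
    refine antitoneOn_of_deriv_nonpos (convex_Ico δ 1) (hH''.mono hsub').continuousOn
      (hH''.mono (interior_subset.trans hsub')) fun x hx => hH3 x ?_
    rw [interior_Ico] at hx
    exact Ioo_subset_Ico_self hx
  have hδ1 : δ ∈ Ico δ 1 := ⟨le_rfl, by linarith⟩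
  have hH'le : ∀ x ∈ Ico δ 1, deriv H x ≤ 4 * κ := fun x hx => by
    have := image_sub_le_mul_sub_of_deriv_le_on hH' (hsub le_rfl hx.2) hx.1 (c := 3 * κ)
      fun z hz => (hanti hδ1 ⟨hz.1.le, hz.2.trans hx.2⟩ hz.1.le).trans hH''δ
    nlinarith [hx.2]
  have hHle : ∀ x ∈ Ico δ 1, H x ≤ 5 * κ := fun x hx => by
    have := image_sub_le_mul_sub_of_deriv_le_on hH (hsub le_rfl hx.2) hx.1 (c := 4 * κ)
      fun z hz => hH'le z ⟨hz.1.le, hz.2.trans hx.2⟩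
    nlinarith [hx.2]
  have hH3le : ∀ x ∈ Ioo δ (1 / 2), deriv (deriv (deriv H)) x ≤ -50 * κ := fun x hx => by
    have hx' : x ∈ Ico δ 1 := ⟨hx.1.le, by linarith [hx.2]⟩
    have := hpow (H x) ⟨hHδ.trans (hmono x hx'), hHle x hx'⟩
    rw [hODE x hx']
    nlinarith [hx.2]
  have hhalf : deriv (deriv H) (1 / 2) ≤ -19 / 2 * κ := by
    have := image_sub_le_mul_sub_of_deriv_le_on hH''
      (hsub le_rfl (by norm_num : (1 / 2 : ℝ) < 1)) (by linarith) hH3le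
    nlinarith
  have hlate := image_sub_le_mul_sub_of_deriv_le_on hH' (hsub (by linarith) (by norm_num))
    (by norm_num : (1 / 2 : ℝ) ≤ 15 / 16) (c := -19 / 2 * κ)
    fun z hz => (hanti ⟨by linarith, by norm_num⟩ ⟨by linarith [hz.1], by linarith [hz.2]⟩
      hz.1.le).trans hhalf
  linarith [hH'le (1 / 2) ⟨by linarith, by norm_num⟩]

theorem eventually_exists_scale {n C : ℝ} (hn0 : 0 < n) (hn : n < 3 / 2) (hC : 0 < C) :
    ∀ᶠ κ in 𝓝[>] 0, ∃ δ, 0 < δ ∧ δ ≤ 1 / 4 ∧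
      κ ^ (-n) * (δ ^ (3 - 2 * n) + δ ^ (4 - 2 * n)) ≤ 1 / (2 * C) ∧
      ∀ y ∈ Icc (κ * δ ^ 2 / 2) (5 * κ), 100 * κ ≤ y ^ (1 - n) := by
  set p := (3 - 2 * n)⁻¹
  have hp : 0 < p := inv_pos.2 (by linarith)
  have hp3 : p * (3 - 2 * n) = 1 := inv_mul_cancel₀ (by linarith)
  set s := (4 * C)⁻¹ with hs_def
  have hs : 0 < s := by positivity
  have hδ0 : Tendsto (fun κ : ℝ => (κ ^ n * s) ^ p) (𝓝[>] 0) (𝓝 0) := by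
    have hid : Tendsto id (𝓝[>] (0 : ℝ)) (𝓝 0) := nhdsWithin_le_nhds
    have := (hid.rpow_const_nhds_zero hn0).mul_const s
    rw [zero_mul] at this
    exact this.rpow_const_nhds_zero hp
  -- `κδ²/2 ≍ κ^{3/(3-2n)}`, and `3(1-n)/(3-2n) < 1` because `n > 0`.
  have hlow := eventually_mul_le_mul_rpow 100
    (Real.rpow_pos_of_pos (by positivity : 0 < s ^ (p * 2) / 2) (1 - n))
    (e := (1 + n * (p * 2)) * (1 - n)) (by nlinarith)
  have hhigh := eventually_mul_le_mul_rpow 100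
    (Real.rpow_pos_of_pos (by norm_num : (0 : ℝ) < 5) (1 - n)) (e := 1 - n) (by linarith)
  filter_upwards [hδ0.eventually (eventually_le_nhds (by norm_num : (0 : ℝ) < 1 / 4)),
    hlow, hhigh, self_mem_nhdsWithin] with κ hδ hlow hhigh (hκ : 0 < κ)
  set δ := (κ ^ n * s) ^ p
  have hδ₀ : 0 < δ := by positivity
  have hδ3 : δ ^ (3 - 2 * n) = κ ^ n * s := Real.rpow_inv_rpow (by positivity) (by linarith)
  have hδ4 : δ ^ (4 - 2 * n) ≤ δ ^ (3 - 2 * n) :=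
    Real.rpow_le_rpow_of_exponent_ge hδ₀ (by linarith) (by linarith)
  refine ⟨δ, hδ₀, hδ, ?_, fun y hy => le_rpow_of_mem_Icc (by positivity) hy ?_ ?_⟩
  · calc κ ^ (-n) * (δ ^ (3 - 2 * n) + δ ^ (4 - 2 * n))
        ≤ κ ^ (-n) * (2 * (κ ^ n * s)) := by gcongr; linarith
      _ = 1 / (2 * C) := by rw [Real.rpow_neg hκ.le, hs_def]; field_simp; ring
  · rwa [mul_sq_rpow_div_two hκ hs, Real.mul_rpow (by positivity) (by positivity),
      ← Real.rpow_mul hκ.le]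
  · rwa [Real.mul_rpow (by norm_num) hκ.le]

namespace ShootSolZero

variable {n C κ : ℝ} {H : ℝ → ℝ}

theorem differentiableOn (hH : ShootSolZero n C κ H) :
    DifferentiableOn ℝ H (Ioo 0 1) ∧ DifferentiableOn ℝ (deriv H) (Ioo 0 1) ∧
      DifferentiableOn ℝ (deriv (deriv H)) (Ioo 0 1) := by
  have h3 := hH.2.1
  have h2 : ContDiffOn ℝ 2 (deriv H) (Ioo 0 1) := h3.deriv_of_isOpen isOpen_Ioo (by norm_num)
  have h1 : ContDiffOn ℝ 1 (deriv (deriv H)) (Ioo 0 1) :=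
    h2.deriv_of_isOpen isOpen_Ioo (by norm_num)
  exact ⟨h3.differentiableOn (by norm_num), h2.differentiableOn (by norm_num),
    h1.differentiableOn one_ne_zero⟩

theorem derivWithin_eq_deriv (hH : ShootSolZero n C κ H) {x : ℝ}
    (hx : x ∈ Ioo 0 1) : derivWithin H (Icc 0 1) x = deriv H x :=
  ((hH.differentiableOn.1 x hx).differentiableAt (isOpen_Ioo.mem_nhds hx)).derivWithin
    (uniqueDiffOn_Icc zero_lt_one x (Ioo_subset_Icc_self hx))

theorem third_deriv_eq (hH : ShootSolZero n C κ H) {x : ℝ} (hx : x ∈ Ioo 0 1)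
    (hpos : ∀ y ∈ Ioc 0 x, 0 < H y) :
    deriv (deriv (deriv H)) x = (x - 1) * H x ^ (1 - n) := by
  have hODE : H x ^ (n - 1) * deriv (deriv (deriv H)) x = -1 + x := hH.2.2.2.2.1 x hx hpos
  have hinv : H x ^ (1 - n) * H x ^ (n - 1) = 1 := by
    rw [← Real.rpow_add (hpos x ⟨hx.1, le_rfl⟩)]
    simp
  calc deriv (deriv (deriv H)) x
      = H x ^ (1 - n) * (H x ^ (n - 1) * deriv (deriv (deriv H)) x) := by
        rw [← mul_assoc, hinv, one_mul]
    _ = (x - 1) * H x ^ (1 - n) := by rw [hODE]; ring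

theorem abs_sub_le_half (hH : ShootSolZero n C κ H) (hC : 0 < C) (hκ : 0 < κ)
    {x : ℝ} (hx : x ∈ Ioo 0 1)
    (hsmall : κ ^ (-n) * (x ^ (3 - 2 * n) + x ^ (4 - 2 * n)) ≤ 1 / (2 * C)) :
    |H x - κ * x ^ 2| ≤ κ * x ^ 2 / 2 ∧ |deriv H x - 2 * κ * x| ≤ κ * x / 2 ∧
      |deriv (deriv H) x - 2 * κ| ≤ κ / 2 := by
  have half : ∀ a, 0 ≤ a →
      C * a * (κ ^ (-n) * (x ^ (3 - 2 * n) + x ^ (4 - 2 * n))) ≤ a / 2 :=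
    fun a ha => calc
      _ ≤ C * a * (1 / (2 * C)) := mul_le_mul_of_nonneg_left hsmall (by positivity)
      _ = a / 2 := by field_simp
  obtain ⟨-, h0, h1, h2⟩ := hH.2.2.2.2.2 x hx
    (hsmall.trans (one_div_le_one_div_of_le hC (by linarith)))
  have hx0 := hx.1
  refine ⟨h0.trans ?_, h1.trans ?_, h2.trans (half κ hκ.le)⟩
  · rw [mul_assoc C κ]; exact half _ (by positivity)
  · rw [mul_assoc C κ]; exact half _ (by positivity)

theorem lower_bounds_of_forall_small (hH : ShootSolZero n C κ H) (hC : 0 < C) (hκ : 0 < κ)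
    (hsmall : ∀ x ∈ Ioo (0 : ℝ) 1,
      κ ^ (-n) * (x ^ (3 - 2 * n) + x ^ (4 - 2 * n)) ≤ 1 / (2 * C)) {x : ℝ}
    (hx : x ∈ Icc 0 1) :
    κ * x ^ 2 / 2 ≤ H x ∧ 3 * κ * x / 2 ≤ derivWithin H (Icc 0 1) x := by
  have hcl : closure (Ioo (0 : ℝ) 1) = Icc 0 1 := closure_Ioo zero_ne_one
  rw [← hcl] at hx
  have hbounds := fun y (hy : y ∈ Ioo (0 : ℝ) 1) => hH.abs_sub_le_half hC hκ hy (hsmall y hy)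
  constructor
  · refine le_on_closure (f := fun y => κ * y ^ 2 / 2) (fun y hy => ?_) (by fun_prop)
      (hcl ▸ hH.1.continuousOn) hx
    linarith [(abs_le.1 (hbounds y hy).1).1]
  · refine le_on_closure (f := fun y => 3 * κ * y / 2) (fun y hy => ?_) (by fun_prop)
      (hcl ▸ hH.1.continuousOn_derivWithin (uniqueDiffOn_Icc zero_lt_one) le_rfl) hx
    rw [hH.derivWithin_eq_deriv hy]
    linarith [(abs_le.1 (hbounds y hy).2.1).1]

theorem exists_deriv_nonpos (hH : ShootSolZero n C κ H) (hC : 0 < C) (hκ : 0 < κ)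
    {δ : ℝ} (hδ₀ : 0 < δ) (hδ : δ ≤ 1 / 4)
    (hsmall : κ ^ (-n) * (δ ^ (3 - 2 * n) + δ ^ (4 - 2 * n)) ≤ 1 / (2 * C))
    (hpow : ∀ y ∈ Icc (κ * δ ^ 2 / 2) (5 * κ), 100 * κ ≤ y ^ (1 - n)) :
    ∃ x ∈ Ioo (0 : ℝ) 1, deriv H x ≤ 0 := by
  by_contra! hderiv
  obtain ⟨hd0, hd1, hd2⟩ := hH.differentiableOn
  have hmono : StrictMonoOn H (Icc 0 1) :=
    strictMonoOn_of_deriv_pos (convex_Icc 0 1) hH.1.continuousOn (by rwa [interior_Icc])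
  have hpos : ∀ x ∈ Ioc (0 : ℝ) 1, 0 < H x := fun x hx =>
    hH.2.2.1 ▸ hmono (left_mem_Icc.2 zero_le_one) (Ioc_subset_Icc_self hx) hx.1
  obtain ⟨h0, h1, h2⟩ := hH.abs_sub_le_half hC hκ ⟨hδ₀, by linarith⟩ hsmall
  rw [abs_le] at h0 h1 h2
  have hlate := deriv_neg_of_third_deriv_eq hd0 hd1 hd2
    (fun x hx => hH.third_deriv_eq ⟨hδ₀.trans_le hx.1, hx.2⟩
      fun y hy => hpos y ⟨hy.1, hy.2.trans hx.2.le⟩)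
    hκ hδ₀ hδ (fun x hx =>
      hmono.monotoneOn ⟨hδ₀.le, by linarith⟩ ⟨hδ₀.le.trans hx.1, hx.2.le⟩ hx.1)
    (by linarith) (by nlinarith) (by nlinarith) (by linarith) hpow
  exact hlate.not_ge (hderiv _ ⟨by norm_num, by norm_num⟩).le

theorem pos_and_derivWithin_pos (hH : ShootSolZero n C κ H) (hn : n < 3 / 2)
    (hC : 0 < C) (hκ : 0 < κ) (hκn : 4 * C ≤ κ ^ n) {x : ℝ} (hx : x ∈ Ioc 0 1) :
    0 < H x ∧ 0 < derivWithin H (Icc 0 1) x := by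
  have hsmall : ∀ y ∈ Ioo (0 : ℝ) 1,
      κ ^ (-n) * (y ^ (3 - 2 * n) + y ^ (4 - 2 * n)) ≤ 1 / (2 * C) := fun y hy => by
    have h3 := Real.rpow_le_one hy.1.le hy.2.le (by linarith : 0 ≤ 3 - 2 * n)
    have h4 := Real.rpow_le_one hy.1.le hy.2.le (by linarith : 0 ≤ 4 - 2 * n)
    have hκn' : κ ^ (-n) ≤ 1 / (4 * C) := by
      rw [Real.rpow_neg hκ.le, ← one_div]
      exact one_div_le_one_div_of_le (by positivity) hκn
    calc κ ^ (-n) * (y ^ (3 - 2 * n) + y ^ (4 - 2 * n)) ≤ 1 / (4 * C) * 2 :=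
          mul_le_mul hκn' (by linarith)
            (add_nonneg (Real.rpow_nonneg hy.1.le _) (Real.rpow_nonneg hy.1.le _)) (by positivity)
      _ = 1 / (2 * C) := by field_simp; ring
  obtain ⟨hH0, hH1⟩ := hH.lower_bounds_of_forall_small hC hκ hsmall (Ioc_subset_Icc_self hx)
  have hx0 := hx.1
  exact ⟨lt_of_lt_of_le (by positivity) hH0, lt_of_lt_of_le (by positivity) hH1⟩

end ShootSolZero

/-- Shooting dichotomy for zero contact angle, `n ∈ (0,3/2)`: for all sufficiently small
`κ` the derivative `H_κ'` drops to `≤ 0` somewhere in `(0,1]` (undershoot), while for all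
sufficiently large `κ` the solution stays positive with `H_κ' > 0` on `(0,1]`, in
particular `H_κ'(1) > 0` (overshoot). -/
theorem shooting_zero_angle (n C : ℝ) (hn0 : 0 < n) (hn : n < 3 / 2) (hC : 0 < C) :
    (∃ κ₀ > 0, ∀ κ : ℝ, 0 < κ → κ ≤ κ₀ → ∀ H : ℝ → ℝ, ShootSolZero n C κ H →
      ∃ x' ∈ Set.Ioc (0:ℝ) 1, derivWithin H (Set.Icc 0 1) x' ≤ 0) ∧
    (∃ κ₁ > 0, ∀ κ : ℝ, κ₁ ≤ κ → ∀ H : ℝ → ℝ, ShootSolZero n C κ H →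
      ∀ x ∈ Set.Ioc (0:ℝ) 1, 0 < H x ∧ 0 < derivWithin H (Set.Icc 0 1) x) := by
  obtain ⟨κ₀, hκ₀, hscale⟩ :=
    mem_nhdsGT_iff_exists_Ioc_subset.1 (eventually_exists_scale hn0 hn hC)
  refine ⟨⟨κ₀, hκ₀, fun κ hκ hκκ₀ H hH => ?_⟩,
    ⟨(4 * C) ^ n⁻¹, by positivity, fun κ hκ H hH x hx => ?_⟩⟩
  · obtain ⟨δ, hδ₀, hδ, hsmall, hpow⟩ := hscale ⟨hκ, hκκ₀⟩
    obtain ⟨x, hx, hHx⟩ := hH.exists_deriv_nonpos hC hκ hδ₀ hδ hsmall hpow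
    exact ⟨x, Ioo_subset_Ioc_self hx, hH.derivWithin_eq_deriv hx ▸ hHx⟩
  · have hκn := Real.rpow_le_rpow (by positivity) hκ hn0.le
    rw [Real.rpow_inv_rpow (by positivity) hn0.ne'] at hκn
    exact hH.pos_and_derivWithin_pos hn hC ((by positivity : (0 : ℝ) < _).trans_le hκ) hκn hx
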